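/- arXiv:2601.16084 — 4 statements merged into one kernel-verified Lean document; each statement's English description precedes it below -/
import Mathlib

section
/- For every μ with 0 < μ < 1 there exists n0 such that for all n ≥ n0, every strongly edge-colored graph G on n vertices contains a spanning subgraph G′ in which every color class has at most μn edges and d_{G′}(v) ≥ d_G(v) − μ²n for every vertex v of G. -/
open SimpleGraph

def StronglyEdgeColored {V C : Type*} (G : SimpleGraph V) (c : Sym2 V → C) : Prop :=
  ∀ a b x y : V, G.Adj a b → G.Adj x y → c s(a, b) = c s(x, y) →
    s(a, b) = s(x, y) ∨
      (a ≠ x ∧ a ≠ y ∧ b ≠ x ∧ b ≠ y ∧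
        ¬G.Adj a x ∧ ¬G.Adj a y ∧ ¬G.Adj b x ∧ ¬G.Adj b y)

/-!
Delete every colour class with more than `μn` edges. The colours at a vertex are distinct, so a
vertex loses at most one edge per deleted colour, and it suffices that there are at most `μ²n`
such colours. Otherwise `⌈μ²n⌉ ≤ n` of them are induced matchings with at least `μ³n²` edges in
total, against the Ruzsa–Szemerédi theorem. That theorem follows from the triangle removal lemma
applied to the tripartite graph on `V ⊕ V ⊕ colours` whose triangles are the triples
`(a, b, colour of ab)`: strongness makes these triangles edge-disjoint and the only ones, so
there are few of them yet many edges must be removed to destroy them.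
-/

open Finset SimpleGraph.TripartiteFromTriangles

variable {V C : Type*} {G : SimpleGraph V} {c : Sym2 V → C}

namespace StronglyEdgeColored

theorem eq_of_adj_of_adj (hc : StronglyEdgeColored G c) {a b b' : V} (h : G.Adj a b)
    (h' : G.Adj a b') (hcol : c s(a, b) = c s(a, b')) : b = b' := by
  rcases hc a b a b' h h' hcol with heq | ⟨ha, -⟩
  · rcases Sym2.eq_iff.1 heq with ⟨-, hb⟩ | ⟨rfl, -⟩
    · exact hb
    · exact absurd h' G.irrefl
  · exact absurd rfl ha

theorem injOn_neighborSet (hc : StronglyEdgeColored G c) (v : V) :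
    (G.neighborSet v).InjOn fun b ↦ c s(v, b) :=
  fun _ hb _ hb' ↦ hc.eq_of_adj_of_adj hb hb'

end StronglyEdgeColored

namespace SimpleGraph

/-- The triangles `{a, b, i}` of the tripartite graph on `V ⊕ V ⊕ B` that encodes the colours
in `B`; each edge of such a colour contributes two of them, one per orientation. -/
def colorTriangles [Fintype V] [DecidableRel G.Adj] [DecidableEq C] (c : Sym2 V → C)
    (B : Finset C) : Finset (V × V × B) :=
  {x | G.Adj x.1 x.2.1 ∧ c s(x.1, x.2.1) = x.2.2}

variable [Fintype V] [DecidableRel G.Adj] [DecidableEq C] {B : Finset C}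

@[simp]
theorem mem_colorTriangles {x : V × V × B} :
    x ∈ G.colorTriangles c B ↔ G.Adj x.1 x.2.1 ∧ c s(x.1, x.2.1) = x.2.2 := by
  simp [colorTriangles]

theorem card_colorTriangles_le : #(G.colorTriangles c B) ≤ Fintype.card V ^ 2 := by
  calc #(G.colorTriangles c B) ≤ #(univ : Finset (V × V)) :=
        card_le_card_of_injOn (fun x ↦ (x.1, x.2.1)) (fun _ _ ↦ mem_coe.2 (mem_univ _)) ?_
    _ = Fintype.card V ^ 2 := by simp [sq]
  rintro ⟨a, b, i⟩ hx ⟨a', b', i'⟩ hy hxy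
  obtain ⟨rfl, rfl⟩ := Prod.mk.inj hxy
  have hi : i.1 = i'.1 := (mem_colorTriangles.1 hx).2.symm.trans (mem_colorTriangles.1 hy).2
  rw [Subtype.ext hi]

theorem card_edges_le_card_colorTriangles :
    #{e ∈ G.edgeFinset | c e ∈ B} ≤ #(G.colorTriangles c B) := by
  refine card_le_card_of_surjOn (fun x ↦ s(x.1, x.2.1)) fun e he ↦ ?_
  induction e using Sym2.ind with | _ a b
  simp only [coe_filter, Set.mem_ofPred_eq, mem_edgeFinset, mem_edgeSet] at he
  exact ⟨(a, b, ⟨_, he.2⟩), by simpa using he.1, rfl⟩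

end SimpleGraph

namespace StronglyEdgeColored

variable [Fintype V] [DecidableRel G.Adj] [DecidableEq C]

theorem explicitDisjoint (hc : StronglyEdgeColored G c) (B : Finset C) :
    ExplicitDisjoint (G.colorTriangles c B) where
  inj₀ _ _ _ _ h h' := by
    rw [mem_colorTriangles] at h h'
    refine hc.eq_of_adj_of_adj h.1.symm h'.1.symm ?_
    rw [Sym2.eq_swap, h.2, Sym2.eq_swap, h'.2]
  inj₁ _ _ _ _ h h' := by
    rw [mem_colorTriangles] at h h'
    exact hc.eq_of_adj_of_adj h.1 h'.1 (h.2.trans h'.2.symm)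
  inj₂ _ _ _ _ h h' := by
    rw [mem_colorTriangles] at h h'
    exact Subtype.ext (h.2.symm.trans h'.2)

/-- Two edges `a'b`, `ab'` of the same colour cannot both touch the edge `ab`, because colour
classes are induced matchings. -/
theorem noAccidental (hc : StronglyEdgeColored G c) (B : Finset C) :
    NoAccidental (G.colorTriangles c B) where
  eq_or_eq_or_eq a a' b b' _ _ h₁ h₂ h₃ := by
    rw [mem_colorTriangles] at h₁ h₂ h₃
    rcases hc a' b a b' h₁.1 h₂.1 (h₁.2.trans h₂.2.symm) with h | ⟨-, -, -, -, -, -, hba, -⟩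
    · rcases Sym2.eq_iff.1 h with ⟨rfl, -⟩ | ⟨-, rfl⟩
      · exact Or.inl rfl
      · exact absurd h₃.1 G.irrefl
    · exact absurd h₃.1.symm hba

/-- The triangles `colorTriangles` are pairwise edge-disjoint and are the only triangles of their
graph, so the triangle removal lemma bounds their number from below, by a multiple of `n³`, while
there are at most `n²` of them. -/
theorem triangleRemovalBound_mul_card_le_one (hc : StronglyEdgeColored G c) {B : Finset C}
    (hB : #B ≤ Fintype.card V) {δ : ℝ} (hδ0 : 0 < δ)
    (hδ : δ * Fintype.card V ^ 2 ≤ #{e ∈ G.edgeFinset | c e ∈ B}) :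
    triangleRemovalBound (δ / 9) * Fintype.card V ≤ 1 := by
  classical
  set n := Fintype.card V
  have := hc.explicitDisjoint B
  have := hc.noAccidental B
  set t := G.colorTriangles c B
  have hN : Fintype.card V + Fintype.card V + Fintype.card B ≤ 3 * n := by
    rw [Fintype.card_coe]; omega
  have hnN : n ≤ Fintype.card (V ⊕ V ⊕ B) := by
    simp only [Fintype.card_sum]; omega
  have ht : δ * n ^ 2 ≤ #t := hδ.trans (Nat.cast_le.2 card_edges_le_card_colorTriangles)
  have htn : (#t : ℝ) ≤ n ^ 2 := by exact_mod_cast card_colorTriangles_le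
  have hfar : (graph t).FarFromTriangleFree (δ / 9) := by
    refine farFromTriangleFree t (le_trans ?_ ht)
    calc δ / 9 * ((Fintype.card V + Fintype.card V + Fintype.card B) ^ 2 : ℕ)
        ≤ δ / 9 * ((3 * n) ^ 2 : ℕ) := by gcongr
      _ = δ * n ^ 2 := by push_cast; ring
  have hrem := hfar.le_card_cliqueFinset
  rw [card_triangles] at hrem
  have hP := (triangleRemovalBound_pos (div_pos hδ0 (by norm_num : (0 : ℝ) < 9))).le
  rcases Nat.eq_zero_or_pos n with hn | hn
  · simp [hn]
  have hn' : (0 : ℝ) < n ^ 2 := by positivity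
  have : triangleRemovalBound (δ / 9) * n * n ^ 2 ≤ 1 * n ^ 2 :=
    calc triangleRemovalBound (δ / 9) * n * n ^ 2
        = triangleRemovalBound (δ / 9) * n ^ 3 := by ring
      _ ≤ triangleRemovalBound (δ / 9) * Fintype.card (V ⊕ V ⊕ B) ^ 3 := by gcongr
      _ ≤ 1 * n ^ 2 := by linarith
  exact le_of_mul_le_mul_right this hn'

end StronglyEdgeColored

/-- **Ruzsa–Szemerédi induced matching theorem** -/
theorem induced_matching_theorem {δ : ℝ} (hδ : 0 < δ) :
    ∃ n0 : ℕ, ∀ (V C : Type*) [Fintype V] (G : SimpleGraph V) [DecidableRel G.Adj]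
      (c : Sym2 V → C) [DecidableEq C], n0 ≤ Fintype.card V → StronglyEdgeColored G c →
      ∀ B : Finset C, #B ≤ Fintype.card V →
        (#{e ∈ G.edgeFinset | c e ∈ B} : ℝ) < δ * Fintype.card V ^ 2 := by
  have hP := triangleRemovalBound_pos (div_pos hδ (by norm_num : (0 : ℝ) < 9))
  refine ⟨⌊1 / triangleRemovalBound (δ / 9)⌋₊ + 1, fun V C _ G _ c _ hn hc B hB ↦ ?_⟩
  by_contra! hdense
  have := Nat.le_floor <|
    (le_div_iff₀' hP).2 (hc.triangleRemovalBound_mul_card_le_one hB hδ hdense)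
  omega

theorem StronglyEdgeColored.ncard_neighborSet_le_deleteEdges_add (hc : StronglyEdgeColored G c)
    (v : V) (B : Finset C) :
    (G.neighborSet v).ncard ≤ ((G.deleteEdges {e | c e ∈ B}).neighborSet v).ncard + #B := by
  set R := {b ∈ G.neighborSet v | c s(v, b) ∈ B}
  have hsplit : G.neighborSet v = (G.deleteEdges {e | c e ∈ B}).neighborSet v ∪ R := by
    ext b
    simp only [mem_neighborSet, deleteEdges_adj, Set.mem_union, Set.mem_ofPred_eq, R]
    tauto
  have hR : R.ncard ≤ #B := by
    rw [← ((hc.injOn_neighborSet v).mono fun _ hb ↦ hb.1).ncard_image,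
      ← Set.ncard_coe_finset]
    exact Set.ncard_le_ncard (Set.image_subset_iff.2 fun _ hb ↦ hb.2)
  rw [hsplit]
  exact (Set.ncard_union_le _ _).trans (Nat.add_le_add_left hR _)

namespace SimpleGraph

variable [Fintype V] [DecidableRel G.Adj] [DecidableEq C]

variable (G) in
noncomputable def bigColors (c : Sym2 V → C) (k : ℝ) : Finset C :=
  {col ∈ G.edgeFinset.image c | k < #{e ∈ G.edgeFinset | c e = col}}

theorem card_mul_le_card_edges_of_subset_bigColors {k : ℝ} {B : Finset C}
    (hB : B ⊆ G.bigColors c k) : #B * k ≤ #{e ∈ G.edgeFinset | c e ∈ B} := by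
  rw [card_eq_sum_card_fiberwise (f := c) (s := {e ∈ G.edgeFinset | c e ∈ B}) (t := B)
    fun _ he ↦ (mem_filter.1 he).2]
  push_cast
  rw [← nsmul_eq_mul]
  refine card_nsmul_le_sum _ _ _ fun col hcol ↦ ?_
  have hbig : k < #{e ∈ G.edgeFinset | c e = col} := (mem_filter.1 (hB hcol)).2
  refine hbig.le.trans (Nat.cast_le.2 (card_le_card fun e he ↦ ?_))
  simp only [filter_filter, mem_filter] at he ⊢
  exact ⟨he.1, he.2 ▸ hcol, he.2⟩

theorem card_bigColors_le {μ : ℝ} (hμ0 : 0 ≤ μ) (hμ1 : μ ≤ 1)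
    (hsparse : ∀ B : Finset C, #B ≤ Fintype.card V →
      (#{e ∈ G.edgeFinset | c e ∈ B} : ℝ) < μ ^ 3 * Fintype.card V ^ 2) :
    (#(G.bigColors c (μ * Fintype.card V)) : ℝ) ≤ μ ^ 2 * Fintype.card V := by
  set n : ℝ := (Fintype.card V : ℝ)
  -- otherwise `⌈μ²n⌉` colours with more than `μn` edges each span at least `μ³n²` edges
  by_contra! hmany
  obtain ⟨B, hB, hcard⟩ := exists_subset_card_eq (Nat.ceil_le.2 hmany.le)
  have hBn : #B ≤ Fintype.card V := by
    rw [hcard, Nat.ceil_le]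
    exact mul_le_of_le_one_left (Nat.cast_nonneg _) (pow_le_one₀ hμ0 hμ1)
  have hμn : 0 ≤ μ * n := by positivity
  have hceil : μ ^ 2 * n * (μ * n) ≤ #B * (μ * n) := by
    gcongr
    rw [hcard]
    exact Nat.le_ceil _
  have := card_mul_le_card_edges_of_subset_bigColors hB
  have := hsparse B hBn
  linarith [show μ ^ 2 * n * (μ * n) = μ ^ 3 * n ^ 2 by ring]

theorem ncard_colorClass_deleteEdges_bigColors_le {k : ℝ} (hk : 0 ≤ k) (col : C) :
    ({e ∈ (G.deleteEdges {e | c e ∈ G.bigColors c k}).edgeSet | c e = col}.ncard : ℝ) ≤ k := by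
  rw [edgeSet_deleteEdges]
  by_cases hcol : col ∈ G.bigColors c k
  · have : {e ∈ G.edgeSet \ {e | c e ∈ G.bigColors c k} | c e = col} = ∅ :=
      Set.eq_empty_of_forall_notMem fun e ⟨⟨_, hne⟩, he⟩ ↦ hne (by rwa [Set.mem_ofPred_eq, he])
    rw [this, Set.ncard_empty, Nat.cast_zero]
    exact hk
  have hsmall : (#{e ∈ G.edgeFinset | c e = col} : ℝ) ≤ k := by
    by_contra! hbig
    obtain ⟨e, he⟩ := card_pos.1 (Nat.cast_pos.1 (hk.trans_lt hbig))
    exact hcol (mem_filter.2 ⟨mem_image.2 ⟨e, (mem_filter.1 he).1, (mem_filter.1 he).2⟩, hbig⟩)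
  refine le_trans (Nat.cast_le.2 ?_) hsmall
  rw [← Set.ncard_coe_finset]
  exact Set.ncard_le_ncard fun e he ↦ by simpa using ⟨he.1.1, he.2⟩

end SimpleGraph

theorem stmt_3 (μ : ℝ) (hμ0 : 0 < μ) (hμ1 : μ < 1) :
    ∃ n0 : ℕ, ∀ (V C : Type) [Fintype V] (G : SimpleGraph V) (c : Sym2 V → C),
      n0 ≤ Fintype.card V → StronglyEdgeColored G c →
      ∃ G' : SimpleGraph V, G' ≤ G ∧
        (∀ col : C, ({e ∈ G'.edgeSet | c e = col}.ncard : ℝ) ≤ μ * Fintype.card V) ∧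
        (∀ v : V, ((G.neighborSet v).ncard : ℝ) - μ ^ 2 * Fintype.card V ≤
          ((G'.neighborSet v).ncard : ℝ)) := by
  obtain ⟨n0, hn0⟩ := induced_matching_theorem (pow_pos hμ0 3)
  refine ⟨n0, fun V C _ G c hn hc ↦ ?_⟩
  classical
  set B := G.bigColors c (μ * Fintype.card V)
  have hB : (#B : ℝ) ≤ μ ^ 2 * Fintype.card V :=
    card_bigColors_le hμ0.le hμ1.le (hn0 V C G c hn hc)
  refine ⟨G.deleteEdges {e | c e ∈ B}, deleteEdges_le _,
    ncard_colorClass_deleteEdges_bigColors_le (by positivity), fun v ↦ ?_⟩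
  have hdeg : ((G.neighborSet v).ncard : ℝ) ≤
      ((G.deleteEdges {e | c e ∈ B}).neighborSet v).ncard + #B := by
    exact_mod_cast hc.ncard_neighborSet_le_deleteEdges_add v B
  linarith
end

section
/- Suppose that for all sufficiently large n, every strongly edge-colored graph G on n vertices with δ(G) ≥ n/2 either contains a rainbow Hamilton cycle or admits a partition V(G) = V1 ∪ V2 with |V1| ≤ |V2| such that G[V2] is ((|V2|−|V1|)/2)-regular and uses exactly |V2|−|V1|−1 colors. Then for all sufficiently large n, every strongly edge-colored graph G on n vertices with δ(G) ≥ (n−1)/2 either contains a rainbow Hamilton path or admits a partition V(G) = V1 ∪ V2 with |V1| ≤ |V2| such that G[V2] is ((|V2|−|V1|−1)/2)-regular and uses exactly |V2|−|V1|−2 colors. -/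
open SimpleGraph

/-- `G` has a Hamilton cycle all of whose edges receive distinct colors. -/
def HasRainbowHamiltonCycle {V C : Type*} [DecidableEq V] (G : SimpleGraph V) (c : Sym2 V → C) : Prop :=
  ∃ (v : V) (p : G.Walk v v), p.IsHamiltonianCycle ∧ (p.edges.map c).Nodup

/-- `G` has a Hamilton path all of whose edges receive distinct colors. -/
def HasRainbowHamiltonPath {V C : Type*} [DecidableEq V] (G : SimpleGraph V) (c : Sym2 V → C) : Prop :=
  ∃ (u v : V) (p : G.Walk u v), p.IsHamiltonian ∧ (p.edges.map c).Nodup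

/-- The set of colors used on edges of `G` lying inside `V2`. -/
def ColorsInside {V C : Type*} (G : SimpleGraph V) (c : Sym2 V → C) (V2 : Finset V) :
    Set C :=
  c '' {e ∈ G.edgeSet | ∀ x ∈ e, x ∈ V2}

/-!
Join a new apex vertex to every vertex of `G`, giving each new edge its own new color. The
coloring stays strong, and `δ(G) ≥ (n - 1)/2` becomes `δ ≥ (n + 1)/2` on the `n + 1` vertices.
A rainbow Hamilton cycle of the apex graph, cut open at the apex, is a rainbow Hamilton path of
`G`. In the extremal case the apex cannot lie in `V2`, since its degree there would be `|V2| - 1`;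
so it lies in `V1`, and deleting it shifts `|V2| - |V1|` by one.
-/

namespace SimpleGraph.Walk

variable {α : Type*} {G : SimpleGraph α} {u v : α}

lemma IsHamiltonianCycle.mem_support_tail_dropLast [DecidableEq α] {p : G.Walk u u}
    (hp : p.IsHamiltonianCycle) (x : α) : x ∈ p.tail.dropLast.support ↔ x ≠ u := by
  have htail : ¬ p.tail.Nil := by
    rw [← length_eq_zero_iff, length_tail]
    have := hp.isCycle.three_le_length
    omega
  have hsupport := support_dropLast_concat htail
  have hnodup := hp.isHamiltonian_tail.isPath.support_nodup
  rw [← hsupport, List.nodup_append] at hnodup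
  have hx := hsupport ▸ hp.isHamiltonian_tail.mem_support x
  rw [List.mem_append, List.mem_singleton] at hx
  exact ⟨fun hmem hxu => hnodup.2.2 x hmem u (List.mem_singleton_self u) hxu, hx.resolve_right⟩

lemma edges_tail_dropLast_sublist (p : G.Walk u v) : p.tail.dropLast.edges.Sublist p.edges := by
  rw [edges_dropLast, edges_tail]
  exact (List.dropLast_sublist _).trans (List.tail_sublist _)

end SimpleGraph.Walk

section Apex

variable {V C : Type*}

def apexGraph (G : SimpleGraph V) : SimpleGraph (Option V) where
  Adj x y := match x, y with
    | some a, some b => G.Adj a b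
    | some _, none => True
    | none, some _ => True
    | none, none => False
  symm := by
    constructor
    rintro (_ | a) (_ | b) h
    exacts [h, trivial, trivial, G.adj_symm h]
  loopless := by
    constructor
    rintro (_ | a) h
    exacts [h, G.irrefl h]

instance (G : SimpleGraph V) [DecidableRel G.Adj] : DecidableRel (apexGraph G).Adj
  | some a, some b => inferInstanceAs (Decidable (G.Adj a b))
  | some _, none => .isTrue trivial
  | none, some _ => .isTrue trivial
  | none, none => .isFalse id

variable {G : SimpleGraph V}

@[simp] lemma apexGraph_adj_some_some {a b : V} :
    (apexGraph G).Adj (some a) (some b) ↔ G.Adj a b := Iff.rfl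

@[simp] lemma apexGraph_adj_some_none {a : V} : (apexGraph G).Adj (some a) none := trivial

@[simp] lemma apexGraph_adj_none_some {b : V} : (apexGraph G).Adj none (some b) := trivial

def apexColor (c : Sym2 V → C) : Sym2 (Option V) → C ⊕ Option V :=
  Sym2.lift ⟨fun x y => match x, y with
    | some a, some b => .inl (c s(a, b))
    | some a, none => .inr (some a)
    | none, some b => .inr (some b)
    | none, none => .inr none,
   by
    rintro (_ | a) (_ | b)
    exacts [rfl, rfl, rfl, congrArg (Sum.inl ∘ c) Sym2.eq_swap]⟩

@[simp] lemma apexColor_some_some (c : Sym2 V → C) (a b : V) :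
    apexColor c s(some a, some b) = .inl (c s(a, b)) := rfl

@[simp] lemma apexColor_some_none (c : Sym2 V → C) (a : V) :
    apexColor c s(some a, none) = .inr (some a) := rfl

@[simp] lemma apexColor_none_some (c : Sym2 V → C) (b : V) :
    apexColor c s(none, some b) = .inr (some b) := rfl

lemma apexColor_comp_map_some (c : Sym2 V → C) :
    apexColor c ∘ Sym2.map some = Sum.inl ∘ c := by
  ext e
  induction e using Sym2.ind
  rfl

lemma stronglyEdgeColored_apexGraph {c : Sym2 V → C} (hG : StronglyEdgeColored G c) :
    StronglyEdgeColored (apexGraph G) (apexColor c) := by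
  rintro (_ | a) (_ | b) (_ | x) (_ | y) hab hxy hc <;> simp_all
  simpa using hG a b x y hab hxy hc

lemma neighborFinset_apexGraph_some [Fintype V] [DecidableRel G.Adj] (x : V) :
    (apexGraph G).neighborFinset (some x) = (G.neighborFinset x).insertNone := by
  ext (_ | y) <;> simp

lemma neighborFinset_apexGraph_none [Fintype V] [DecidableRel G.Adj] :
    (apexGraph G).neighborFinset none = Finset.univ.map Function.Embedding.some := by
  ext (_ | y) <;> simp

lemma degree_apexGraph_some [Fintype V] [DecidableRel G.Adj] (x : V) :
    (apexGraph G).degree (some x) = G.degree x + 1 := by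
  rw [← card_neighborFinset_eq_degree, neighborFinset_apexGraph_some, Finset.card_insertNone,
    card_neighborFinset_eq_degree]

lemma degree_apexGraph_none [Fintype V] [DecidableRel G.Adj] :
    (apexGraph G).degree none = Fintype.card V := by
  rw [← card_neighborFinset_eq_degree, neighborFinset_apexGraph_none, Finset.card_map,
    Finset.card_univ]

lemma card_le_two_mul_degree_apexGraph [Fintype V] [DecidableRel G.Adj]
    (hn : 0 < Fintype.card V) (hdeg : ∀ v, (Fintype.card V : ℤ) - 1 ≤ 2 * (G.degree v : ℤ))
    (v : Option V) :
    Fintype.card (Option V) ≤ 2 * (apexGraph G).degree v := by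
  rw [Fintype.card_option]
  cases v with
  | none => rw [degree_apexGraph_none]; omega
  | some x => rw [degree_apexGraph_some]; have := hdeg x; omega

lemma SimpleGraph.Walk.exists_eq_map_some_of_none_notMem {x z : Option V} (p : (apexGraph G).Walk x z)
    (hp : none ∉ p.support) : ∃ (a b : V) (q : G.Walk a b), x = some a ∧ z = some b ∧
      p.support = q.support.map some ∧ p.edges = q.edges.map (Sym2.map some) := by
  induction p with
  | @nil u =>
    obtain _ | a := u
    · simp at hp
    · exact ⟨a, a, .nil, rfl, rfl, rfl, rfl⟩
  | @cons u w _ h p ih =>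
    rw [support_cons, List.mem_cons, not_or] at hp
    obtain ⟨a', b, q, rfl, rfl, hs, he⟩ := ih hp.2
    obtain _ | a := u
    · exact absurd rfl hp.1
    exact ⟨a, b, .cons (apexGraph_adj_some_some.mp h) q, rfl, rfl, by simp [hs], by simp [he]⟩

lemma hasRainbowHamiltonPath_of_apexGraph [DecidableEq V] {c : Sym2 V → C}
    (h : HasRainbowHamiltonCycle (apexGraph G) (apexColor c)) : HasRainbowHamiltonPath G c := by
  obtain ⟨v, p, hp, hrainbow⟩ := h
  -- Start the cycle at the apex and cut off its two apex edges.
  set p' := p.rotate none (hp.mem_support none)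
  have hp' : p'.IsHamiltonianCycle := hp.rotate _
  obtain ⟨a, b, q, -, -, hsupport, hedges⟩ :=
    p'.tail.dropLast.exists_eq_map_some_of_none_notMem
      (mt (hp'.mem_support_tail_dropLast none).mp (not_not_intro rfl))
  refine ⟨a, b, q, ?_, ?_⟩
  · have hnodup := hp'.isHamiltonian_tail.isPath.dropLast.support_nodup
    rw [hsupport] at hnodup
    refine (Walk.IsPath.mk' hnodup.of_map).isHamiltonian_of_mem fun x => ?_
    simpa [hsupport] using (hp'.mem_support_tail_dropLast (some x)).mpr nofun
  · have hrotate : (p'.edges.map (apexColor c)).Nodup :=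
      ((p.rotate_edges none _).map _).nodup_iff.mpr hrainbow
    have := ((Walk.edges_tail_dropLast_sublist p').map _).nodup hrotate
    rw [hedges, List.map_map, apexColor_comp_map_some, ← List.map_map] at this
    exact this.of_map _

lemma sep_edgeSet_apexGraph_eq_image {s : Finset (Option V)} (hs : none ∉ s) :
    {e ∈ (apexGraph G).edgeSet | ∀ x ∈ e, x ∈ s} =
      Sym2.map some '' {e ∈ G.edgeSet | ∀ x ∈ e, x ∈ s.eraseNone} := by
  refine subset_antisymm ?_ ?_
  · rintro e ⟨he, hmem⟩
    induction e using Sym2.ind with | _ x y => ?_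
    obtain _ | a := x
    · exact absurd (hmem none (Sym2.mem_mk_left _ _)) hs
    obtain _ | b := y
    · exact absurd (hmem none (Sym2.mem_mk_right _ _)) hs
    exact ⟨s(a, b), ⟨he, by simpa using hmem⟩, rfl⟩
  · rintro _ ⟨e, ⟨he, hmem⟩, rfl⟩
    induction e using Sym2.ind
    simp_all

lemma colorsInside_apexGraph (c : Sym2 V → C) {s : Finset (Option V)} (hs : none ∉ s) :
    ColorsInside (apexGraph G) (apexColor c) s = Sum.inl '' ColorsInside G c s.eraseNone := by
  rw [ColorsInside, ColorsInside, sep_edgeSet_apexGraph_eq_image hs, ← Set.image_comp,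
    apexColor_comp_map_some, Set.image_comp]

lemma eraseNone_filter_apexGraph_adj_some [DecidableRel G.Adj] (s : Finset (Option V)) (v : V) :
    (s.filter ((apexGraph G).Adj (some v))).eraseNone = s.eraseNone.filter (G.Adj v) := by
  ext
  simp

lemma none_notMem_of_two_mul_card_filter_apexGraph_adj_eq [Fintype V] [DecidableEq V]
    [DecidableRel G.Adj] (hn : 2 ≤ Fintype.card V) {V1 V2 : Finset (Option V)}
    (hdisj : Disjoint V1 V2) (huniv : V1 ∪ V2 = Finset.univ)
    (hreg : ∀ v ∈ V2, 2 * ((V2.filter ((apexGraph G).Adj v)).card : ℤ) = V2.card - V1.card) :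
    none ∉ V2 := by
  intro hnone
  have hfilter : V2.filter ((apexGraph G).Adj none) = V2.erase none := by
    ext (_ | y) <;> simp
  have hcard : V1.card + V2.card = Fintype.card V + 1 := by
    rw [← Finset.card_union_of_disjoint hdisj, huniv, Finset.card_univ, Fintype.card_option]
  have hreg_none := hreg none hnone
  rw [hfilter, Finset.card_erase_of_mem hnone,
    Nat.cast_sub (Finset.card_pos.mpr ⟨none, hnone⟩)] at hreg_none
  omega

lemma exists_partition_of_apexGraph [Fintype V] [DecidableEq V] [DecidableRel G.Adj]
    {c : Sym2 V → C} (hn : 2 ≤ Fintype.card V) {V1 V2 : Finset (Option V)}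
    (hdisj : Disjoint V1 V2) (huniv : V1 ∪ V2 = Finset.univ) (hle : V1.card ≤ V2.card)
    (hreg : ∀ v ∈ V2, 2 * ((V2.filter ((apexGraph G).Adj v)).card : ℤ) = V2.card - V1.card)
    (hcol : ((ColorsInside (apexGraph G) (apexColor c) V2).ncard : ℤ) = V2.card - V1.card - 1) :
    ∃ W1 W2 : Finset V, Disjoint W1 W2 ∧ W1 ∪ W2 = Finset.univ ∧ W1.card ≤ W2.card ∧
      (∀ v ∈ W2, 2 * ((W2.filter (G.Adj v)).card : ℤ) = (W2.card : ℤ) - W1.card - 1) ∧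
      ((ColorsInside G c W2).ncard : ℤ) = (W2.card : ℤ) - W1.card - 2 := by
  have hV2 : none ∉ V2 := none_notMem_of_two_mul_card_filter_apexGraph_adj_eq hn hdisj huniv hreg
  have hV1 : none ∈ V1 := by
    have : none ∈ V1 ∪ V2 := huniv ▸ Finset.mem_univ none
    simpa [hV2] using this
  have hcard1 : V1.eraseNone.card + 1 = V1.card := by
    have := Finset.card_pos.mpr ⟨none, hV1⟩
    rw [Finset.card_eraseNone_of_mem hV1]
    omega
  have hcard2 : V2.eraseNone.card = V2.card := Finset.card_eraseNone_of_not_mem hV2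
  refine ⟨V1.eraseNone, V2.eraseNone, ?_, ?_,
    ((Nat.le_succ _).trans_eq hcard1).trans (hle.trans_eq hcard2.symm), fun v hv => ?_, ?_⟩
  · exact Finset.disjoint_left.mpr fun a h1 h2 =>
      Finset.disjoint_left.mp hdisj (Finset.mem_eraseNone.mp h1) (Finset.mem_eraseNone.mp h2)
  · rw [← Finset.eraseNone_union, huniv]
    ext
    simp
  · have hreg_v := hreg (some v) (Finset.mem_eraseNone.mp hv)
    rw [← Finset.card_eraseNone_of_not_mem (by simp [hV2]),
      eraseNone_filter_apexGraph_adj_some] at hreg_v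
    omega
  · rw [colorsInside_apexGraph c hV2, Set.ncard_image_of_injective _ Sum.inl_injective] at hcol
    omega

end Apex

theorem stmt_5
    (hyp : ∃ n0 : ℕ, ∀ (V C : Type) [Fintype V] [DecidableEq V]
      (G : SimpleGraph V) [DecidableRel G.Adj] (c : Sym2 V → C),
      n0 ≤ Fintype.card V → StronglyEdgeColored G c →
      (∀ v : V, Fintype.card V ≤ 2 * G.degree v) →
      (HasRainbowHamiltonCycle G c ∨
        ∃ V1 V2 : Finset V, Disjoint V1 V2 ∧ V1 ∪ V2 = Finset.univ ∧
          V1.card ≤ V2.card ∧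
          (∀ v ∈ V2, 2 * ((V2.filter (G.Adj v)).card : ℤ) = (V2.card : ℤ) - V1.card) ∧
          ((ColorsInside G c V2).ncard : ℤ) = (V2.card : ℤ) - V1.card - 1)) :
    ∃ n0 : ℕ, ∀ (V C : Type) [Fintype V] [DecidableEq V]
      (G : SimpleGraph V) [DecidableRel G.Adj] (c : Sym2 V → C),
      n0 ≤ Fintype.card V → StronglyEdgeColored G c →
      (∀ v : V, (Fintype.card V : ℤ) - 1 ≤ 2 * (G.degree v : ℤ)) →
      (HasRainbowHamiltonPath G c ∨
        ∃ V1 V2 : Finset V, Disjoint V1 V2 ∧ V1 ∪ V2 = Finset.univ ∧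
          V1.card ≤ V2.card ∧
          (∀ v ∈ V2, 2 * ((V2.filter (G.Adj v)).card : ℤ) = (V2.card : ℤ) - V1.card - 1) ∧
          ((ColorsInside G c V2).ncard : ℤ) = (V2.card : ℤ) - V1.card - 2) := by
  obtain ⟨n0, hn0⟩ := hyp
  refine ⟨max n0 2, fun V C _ _ G _ c hcard hcolored hdeg => ?_⟩
  have hn : 2 ≤ Fintype.card V := le_of_max_le_right hcard
  rcases hn0 (Option V) (C ⊕ Option V) (apexGraph G) (apexColor c)
      (by rw [Fintype.card_option]; exact (le_of_max_le_left hcard).trans (Nat.le_succ _))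
      (stronglyEdgeColored_apexGraph hcolored)
      (card_le_two_mul_degree_apexGraph (by omega) hdeg) with
    hcycle | ⟨V1, V2, hdisj, huniv, hle, hreg, hcol⟩
  · exact .inl (hasRainbowHamiltonPath_of_apexGraph hcycle)
  · exact .inr (exists_partition_of_apexGraph hn hdisj huniv hle hreg hcol)
end

section
/- Let G be an n-vertex graph admitting a partition V(G) = V1 ∪ V2 with |V1| ≤ |V2| such that δ(G[V1, V2]) ≥ 1 and d_G(v, V1) ≥ 2 for every v ∈ V1. Suppose there do NOT exist two vertex-disjoint edges e1 = vw, e2 = uw' with v, u ∈ V1, w, w' ∈ V2, and uv ∈ E(G). Then there exists a vertex w ∈ V2 and two vertices u, v ∈ V1 with uv ∈ E(G) such that N_G(v, V2) = N_G(u, V2) = {w}. -/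
open SimpleGraph

theorem stmt_13 {V : Type*} [Fintype V] [DecidableEq V] [Nonempty V]
    (G : SimpleGraph V) [DecidableRel G.Adj]
    (V1 V2 : Finset V) (hdisj : Disjoint V1 V2) (hunion : V1 ∪ V2 = Finset.univ)
    (hcard : V1.card ≤ V2.card)
    (hcross1 : ∀ v ∈ V1, ∃ w ∈ V2, G.Adj v w)
    (hcross2 : ∀ w ∈ V2, ∃ v ∈ V1, G.Adj v w)
    (hd1 : ∀ v ∈ V1, 2 ≤ (V1.filter (G.Adj v)).card)
    (hno : ¬∃ v u w w' : V, v ∈ V1 ∧ u ∈ V1 ∧ w ∈ V2 ∧ w' ∈ V2 ∧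
      G.Adj v w ∧ G.Adj u w' ∧ G.Adj u v ∧ v ≠ u ∧ w ≠ w') :
    ∃ w ∈ V2, ∃ u v : V, u ∈ V1 ∧ v ∈ V1 ∧ G.Adj u v ∧
      G.neighborSet v ∩ ↑V2 = {w} ∧ G.neighborSet u ∩ ↑V2 = {w} := by
  push_neg at hno
  -- V1 is nonempty
  obtain ⟨v, hv⟩ : ∃ v, v ∈ V1 := by
    by_contra h
    push_neg at h
    obtain ⟨x⟩ := ‹Nonempty V›
    have hx : x ∈ V2 := by
      have := Finset.mem_univ x
      rw [← hunion, Finset.mem_union] at this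
      rcases this with h1 | h2
      · exact absurd h1 (h x)
      · exact h2
    obtain ⟨y, hy, _⟩ := hcross2 x hx
    exact h y hy
  -- a V1-neighbor of v
  obtain ⟨u, hu⟩ : ∃ u, u ∈ V1.filter (G.Adj v) := by
    have := hd1 v hv
    exact Finset.card_pos.mp (by omega)
  rw [Finset.mem_filter] at hu
  obtain ⟨hu1, hvu⟩ := hu
  obtain ⟨w, hw2, hvw⟩ := hcross1 v hv
  obtain ⟨w', hw'2, huw'⟩ := hcross1 u hu1
  have hne : v ≠ u := G.ne_of_adj hvu
  have hww' : w = w' := hno v u w w' hv hu1 hw2 hw'2 hvw huw' hvu.symm hne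
  subst hww'
  refine ⟨w, hw2, u, v, hu1, hv, hvu.symm, ?_, ?_⟩
  · ext x
    simp only [Set.mem_inter_iff, mem_neighborSet, Finset.coe_mem, Set.mem_singleton_iff,
      Finset.mem_coe]
    constructor
    · rintro ⟨hadj, hx2⟩
      exact hno v u x w hv hu1 hx2 hw2 hadj huw' hvu.symm hne
    · rintro rfl; exact ⟨hvw, hw2⟩
  · ext x
    simp only [Set.mem_inter_iff, mem_neighborSet, Set.mem_singleton_iff, Finset.mem_coe]
    constructor
    · rintro ⟨hadj, hx2⟩
      exact hno u v x w hu1 hv hx2 hw2 hadj hvw hvu hne.symm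
    · rintro rfl; exact ⟨huw', hw2⟩
end

section
/- Let G be a strongly edge-colored graph, M a maximum rainbow matching of G, and H the induced subgraph on V(G) \ V(M). Suppose e ∈ M is incident (in G) to an edge f with one endpoint in V(H) such that the color of f does not appear on M. Then no edge e′ of H has the same color as e. -/
/-!
Suppose an edge `ab` of `H` had the color of `e = xy`. Strong edge-coloring makes `ab` vertex-disjoint
from every edge touching `xy`, in particular from `f = zw`. Hence `M - e + ab + f` is a matching; it
is rainbow because `ab` takes over the color of `e` and the color of `f` is new. It has one edge more
than `M`, contradicting maximality.
-/

open SimpleGraph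

namespace Set

variable {α β : Type*} {f : α → β} {s : Set α} {e p q : α}

lemma InjOn.notMem_insert_sdiff_singleton (hs : s.InjOn f) (he : e ∈ s) (hp : f p = f e)
    (hq : f q ∉ f '' s) : p ∉ insert q (s \ {e}) := by
  rintro (rfl | ⟨hps, hpe⟩)
  · exact hq ⟨e, he, hp.symm⟩
  · exact hpe (hs hps he hp)

lemma InjOn.insert_insert_sdiff_singleton (hs : s.InjOn f) (he : e ∈ s) (hp : f p = f e)
    (hq : f q ∉ f '' s) : (insert p (insert q (s \ {e}))).InjOn f := by
  have hqs : q ∉ s \ {e} := fun h => hq ⟨q, h.1, rfl⟩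
  rw [injOn_insert (hs.notMem_insert_sdiff_singleton he hp hq), injOn_insert hqs, hp]
  refine ⟨⟨hs.mono sdiff_subset, fun h => hq (image_mono sdiff_subset h)⟩, ?_⟩
  rintro ⟨r, hr | ⟨hrs, hre⟩, hre'⟩
  · subst hr
    exact hq ⟨e, he, hre'.symm⟩
  · exact hre (hs hrs he hre')

lemma ncard_insert_insert_sdiff_singleton (hs : s.Finite) (he : e ∈ s)
    (hp : p ∉ insert q (s \ {e})) (hq : q ∉ s) :
    (insert p (insert q (s \ {e}))).ncard = s.ncard + 1 := by
  rw [ncard_insert_of_notMem hp (hs.sdiff.insert q),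
    ncard_insert_of_notMem (fun h => hq h.1) hs.sdiff, ncard_sdiff_singleton_add_one he hs]

end Set

namespace SimpleGraph.Subgraph

variable {V : Type*} {G : SimpleGraph V} {M N : G.Subgraph} {x y : V}

lemma IsMatching.deleteVerts_pair (hM : M.IsMatching) (hxy : M.Adj x y) :
    (M.deleteVerts {x, y}).IsMatching := by
  rintro v ⟨hv, hvxy⟩
  obtain ⟨u, hvu, hu⟩ := hM hv
  have hu' : u ∉ ({x, y} : Set V) := by
    rintro (rfl | rfl)
    · exact hvxy (Or.inr (hM.eq_of_adj_left hvu.symm hxy))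
    · exact hvxy (Or.inl (hM.eq_of_adj_right hvu hxy))
  exact ⟨u, deleteVerts_adj.mpr ⟨hv, hvxy, M.edge_vert hvu.symm, hu', hvu⟩,
    fun u' h => hu u' (deleteVerts_adj.mp h).2.2.2.2⟩

lemma IsMatching.edgeSet_deleteVerts_pair (hM : M.IsMatching) (hxy : M.Adj x y) :
    (M.deleteVerts {x, y}).edgeSet = M.edgeSet \ {s(x, y)} := by
  have notMem_of_ne {u v : V} (huv : M.Adj u v) (hne : s(u, v) ≠ s(x, y)) :
      u ∉ ({x, y} : Set V) := by
    rintro (rfl | rfl)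
    · exact hne (by rw [hM.eq_of_adj_left huv hxy])
    · exact hne (by rw [hM.eq_of_adj_left huv hxy.symm, Sym2.eq_swap])
  ext e
  refine Sym2.ind (fun u v => ?_) e
  simp only [Subgraph.mem_edgeSet, deleteVerts_adj, Set.mem_sdiff, Set.mem_singleton_iff]
  constructor
  · rintro ⟨-, hu, -, -, huv⟩
    exact ⟨huv, fun h => hu (by rw [Sym2.eq_iff] at h; rcases h with ⟨rfl, -⟩ | ⟨rfl, -⟩ <;> simp)⟩
  · rintro ⟨huv, hne⟩
    exact ⟨M.edge_vert huv, notMem_of_ne huv hne, M.edge_vert huv.symm,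
      notMem_of_ne huv.symm (by rwa [Sym2.eq_swap]), huv⟩

lemma IsMatching.deleteVerts_pair_sup (hM : M.IsMatching) (hxy : M.Adj x y) (hN : N.IsMatching)
    (hd : Disjoint (M.verts \ {x, y}) N.verts) : (M.deleteVerts {x, y} ⊔ N).IsMatching :=
  (hM.deleteVerts_pair hxy).sup hN (hd.mono (support_subset_verts _) (support_subset_verts _))

lemma IsMatching.subgraphOfAdj_sup {a b z w : V} (hab : G.Adj a b) (hzw : G.Adj z w)
    (hd : Disjoint ({a, b} : Set V) {z, w}) :
    (G.subgraphOfAdj hab ⊔ G.subgraphOfAdj hzw).IsMatching :=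
  (subgraphOfAdj hab).sup (subgraphOfAdj hzw) (by simpa using hd)

end SimpleGraph.Subgraph

lemma StronglyEdgeColored.disjoint_of_adj {V C : Type*} {G : SimpleGraph V} {c : Sym2 V → C}
    (hc : StronglyEdgeColored G c) {a b x y z w : V} (hab : G.Adj a b) (hxy : G.Adj x y)
    (hcol : c s(a, b) = c s(x, y)) (hne : s(a, b) ≠ s(x, y)) (hz : z = x ∨ z = y)
    (hzw : G.Adj z w) : Disjoint ({a, b} : Set V) {z, w} := by
  obtain h | ⟨hax, hay, hbx, hby, hnax, hnay, hnbx, hnby⟩ := hc a b x y hab hxy hcol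
  · exact absurd h hne
  rw [Set.disjoint_insert_left, Set.disjoint_singleton_left]
  rcases hz with rfl | rfl <;> simp only [Set.mem_insert_iff, Set.mem_singleton_iff, not_or]
  · exact ⟨⟨hax, fun h => hnax (h ▸ hzw.symm)⟩, hbx, fun h => hnbx (h ▸ hzw.symm)⟩
  · exact ⟨⟨hay, fun h => hnay (h ▸ hzw.symm)⟩, hby, fun h => hnby (h ▸ hzw.symm)⟩

theorem stmt_14 {V C : Type*} [Fintype V] (G : SimpleGraph V) (c : Sym2 V → C)
    (hSEC : StronglyEdgeColored G c)
    (M : G.Subgraph) (hM : M.IsMatching) (hMrainbow : Set.InjOn c M.edgeSet)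
    (hMmax : ∀ M' : G.Subgraph, M'.IsMatching → Set.InjOn c M'.edgeSet →
      M'.edgeSet.ncard ≤ M.edgeSet.ncard)
    -- `e = s(x, y)` is an edge of `M`, and `f = s(z, w)` is an edge of `G`
    -- incident to `e` whose other endpoint `w` lies outside `V(M)`,
    -- with the color of `f` not appearing on `M`.
    (x y : V) (he : s(x, y) ∈ M.edgeSet)
    (z w : V) (hf : G.Adj z w) (hz : z = x ∨ z = y) (hw : w ∉ M.verts)
    (hcf : c s(z, w) ∉ c '' M.edgeSet) :
    ∀ a b : V, G.Adj a b → a ∉ M.verts → b ∉ M.verts → c s(a, b) ≠ c s(x, y) := by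
  intro a b hab ha hb hcab
  have hxy : M.Adj x y := he
  have hne : s(a, b) ≠ s(x, y) := fun h => ha (M.mem_verts_of_mem_edge (h ▸ he) (by simp))
  have hd := hSEC.disjoint_of_adj hab (M.adj_sub hxy) hcab hne hz hf
  have hfree : Disjoint (M.verts \ {x, y}) ({a, b} ∪ {z, w}) := by
    have hz' : z ∈ ({x, y} : Set V) := by rcases hz with rfl | rfl <;> simp
    rw [Set.disjoint_right]
    rintro v ((rfl | rfl) | (rfl | rfl)) ⟨hvM, hvxy⟩
    exacts [ha hvM, hb hvM, hvxy hz', hw hvM]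
  have hmatch := hM.deleteVerts_pair_sup hxy (Subgraph.IsMatching.subgraphOfAdj_sup hab hf hd)
    (by simpa using hfree)
  have hedges : (M.deleteVerts {x, y} ⊔ (G.subgraphOfAdj hab ⊔ G.subgraphOfAdj hf)).edgeSet =
      insert s(a, b) (insert s(z, w) (M.edgeSet \ {s(x, y)})) := by
    rw [Subgraph.edgeSet_sup, Subgraph.edgeSet_sup, hM.edgeSet_deleteVerts_pair hxy,
      edgeSet_subgraphOfAdj, edgeSet_subgraphOfAdj]
    ext; simp only [Set.mem_union, Set.mem_insert_iff, Set.mem_singleton_iff]; tauto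
  have hle := hMmax _ hmatch (hedges ▸ hMrainbow.insert_insert_sdiff_singleton he hcab hcf)
  rw [hedges, Set.ncard_insert_insert_sdiff_singleton (Set.toFinite _) he
    (hMrainbow.notMem_insert_sdiff_singleton he hcab hcf)
    (fun h => hcf ⟨_, h, rfl⟩)] at hle
  omega
end
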